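/- In the setting of the Rayleigh identity, if additionally $L(U)$ and $L(V)$ are positive semidefinite and $X(W)$ is positive definite, then $(D_U f(W))(D_V f(W)) \ge f(W)\, D_U D_V f(W)$. -/

import Mathlib

/-!
Along a line, `t ↦ det (Y + t • A)` has derivative `det Y * tr (Y⁻¹ * A)` at `0`; differentiating
this once more in the direction `B`, with `d(Y⁻¹) = -Y⁻¹ dY Y⁻¹`, gives
`D_U D_V f = f * (tr (X⁻¹ B) tr (X⁻¹ A) - tr (X⁻¹ B X⁻¹ A))` for `A = L U`, `B = L V`.
Hence `D_U f * D_V f - f * D_U D_V f = f² tr (X⁻¹ B X⁻¹ A) ≥ 0`, the trace of a product of the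
positive semidefinite matrices `X⁻¹ B X⁻¹` and `A`.
-/

open Matrix

-- Any norm on matrices would do: only the topology it induces enters the derivatives.
attribute [local instance] Matrix.linftyOpNormedRing Matrix.linftyOpNormedAlgebra

theorem hasDerivAt_ringInverse_add_smul {𝕜 R : Type*} [NontriviallyNormedField 𝕜] [NormedRing R]
    [HasSummableGeomSeries R] [NormedAlgebra 𝕜 R] (x : Rˣ) (b : R) :
    HasDerivAt (fun s : 𝕜 => Ring.inverse (↑x + s • b)) (-(↑x⁻¹ * b * ↑x⁻¹)) 0 := by
  have hpath : HasDerivAt (fun s : 𝕜 => (x : R) + s • b) b 0 :=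
    ((hasDerivAt_id (0 : 𝕜)).smul_const b).const_add _ |>.congr_deriv (one_smul _ _)
  exact (hasFDerivAt_ringInverse x).comp_hasDerivAt_of_eq 0 hpath (by simp)
    |>.congr_deriv (by simp)

namespace Matrix

variable {n 𝕜 : Type*} [Fintype n] [DecidableEq n]

theorem hasDerivAt_det_add_smul [NontriviallyNormedField 𝕜] {M : Matrix n n 𝕜} (hM : IsUnit M.det)
    (N : Matrix n n 𝕜) :
    HasDerivAt (fun t : 𝕜 => (M + t • N).det) (M.det * (M⁻¹ * N).trace) 0 := by
  set q := ((1 + (Polynomial.X : Polynomial 𝕜) • (M⁻¹ * N).map Polynomial.C).det).divX.divX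
  have hexpand : (fun t : 𝕜 => (M + t • N).det)
      = fun t => M.det * (1 + (M⁻¹ * N).trace * t + q.eval t * t ^ 2) := by
    funext t
    -- `M + t • N = M * (1 + t • (M⁻¹ * N))`
    rw [← det_one_add_smul, ← det_mul, mul_add, mul_one, Matrix.mul_smul,
      mul_nonsing_inv_cancel_left _ _ hM]
  have hquad : HasDerivAt (fun t : 𝕜 => q.eval t * t ^ 2) 0 0 :=
    ((q.hasDerivAt 0).mul (hasDerivAt_pow 2 0)).congr_deriv (by simp)
  rw [hexpand]
  have hlin := ((hasDerivAt_id (0 : 𝕜)).const_mul (M⁻¹ * N).trace).const_add 1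
  simpa using (hlin.add hquad).const_mul M.det

variable [RCLike 𝕜]

theorem hasDerivAt_inv_add_smul {X : Matrix n n 𝕜} (hX : IsUnit X) (B : Matrix n n 𝕜) :
    HasDerivAt (fun s : 𝕜 => (X + s • B)⁻¹) (-(X⁻¹ * B * X⁻¹)) 0 := by
  obtain ⟨u, rfl⟩ := hX
  simp only [nonsing_inv_eq_ringInverse, Ring.inverse_unit]
  exact hasDerivAt_ringInverse_add_smul u B

theorem deriv_deriv_det_add_smul_add_smul {X : Matrix n n 𝕜} (hX : IsUnit X.det)
    (A B : Matrix n n 𝕜) :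
    deriv (fun s : 𝕜 => deriv (fun t : 𝕜 => (X + s • B + t • A).det) 0) 0
      = X.det * ((X⁻¹ * B).trace * (X⁻¹ * A).trace - (X⁻¹ * B * X⁻¹ * A).trace) := by
  have hdet := hasDerivAt_det_add_smul hX B
  have hunit : ∀ᶠ s : 𝕜 in nhds 0, IsUnit (X + s • B).det := by
    filter_upwards [hdet.continuousAt.eventually_ne (by simpa using hX.ne_zero)] with s hs
    exact hs.isUnit
  have hinner : (fun s : 𝕜 => deriv (fun t : 𝕜 => (X + s • B + t • A).det) 0)
      =ᶠ[nhds 0] fun s => (X + s • B).det * ((X + s • B)⁻¹ * A).trace := by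
    filter_upwards [hunit] with s hs
    exact (hasDerivAt_det_add_smul hs A).deriv
  have htrace : HasDerivAt (fun s : 𝕜 => ((X + s • B)⁻¹ * A).trace)
      (-(X⁻¹ * B * X⁻¹) * A).trace 0 :=
    (traceLinearMap n 𝕜 𝕜).toContinuousLinearMap.hasFDerivAt.comp_hasDerivAt 0
      ((hasDerivAt_inv_add_smul ((isUnit_iff_isUnit_det X).mpr hX) B).mul_const A)
  rw [hinner.deriv_eq, (hdet.fun_mul htrace).deriv]
  simp only [add_zero, zero_smul, neg_mul, trace_neg]
  ring

open scoped ComplexOrder in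
theorem PosSemidef.trace_mul_nonneg {A B : Matrix n n 𝕜} (hA : A.PosSemidef)
    (hB : B.PosSemidef) : 0 ≤ (A * B).trace := by
  open scoped MatrixOrder in
  obtain ⟨C, rfl⟩ := CStarAlgebra.nonneg_iff_eq_star_mul_self.mp hB.nonneg
  rw [← mul_assoc, trace_mul_cycle, star_eq_conjTranspose]
  exact (hA.mul_mul_conjTranspose_same C).trace_nonneg

end Matrix

/-- Rayleigh-type inequality: for `f(W) = det(L(W) + R)` with `L` linear,
if `L(U), L(V)` are positive semidefinite and `X(W) = L(W) + R` is positive definite,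
then `(D_U f)(D_V f) ≥ f · D_U D_V f`. -/
theorem rayleigh_inequality_det {P : Type*} [AddCommGroup P] [Module ℝ P] {n : ℕ}
    (L : P →ₗ[ℝ] Matrix (Fin n) (Fin n) ℝ) (R : Matrix (Fin n) (Fin n) ℝ)
    (W U V : P) (hX : (L W + R).PosDef)
    (hU : (L U).PosSemidef) (hV : (L V).PosSemidef) :
    (L W + R).det *
      (deriv (fun s : ℝ =>
        deriv (fun t : ℝ => (L (W + t • U + s • V) + R).det) 0) 0)
    ≤ (deriv (fun t : ℝ => (L (W + t • U) + R).det) 0) *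
        (deriv (fun s : ℝ => (L (W + s • V) + R).det) 0) := by
  set X := L W + R
  have hdet : IsUnit X.det := hX.det_pos.ne'.isUnit
  have hline : ∀ Y : P, (fun t : ℝ => (L (W + t • Y) + R).det) = fun t => (X + t • L Y).det := by
    intro Y; funext t; rw [map_add, map_smul, add_right_comm]
  have hplane : ∀ s t : ℝ, L (W + t • U + s • V) + R = X + s • L V + t • L U := by
    intro s t; simp only [X, map_add, map_smul]; abel
  have hconj : (X⁻¹ * L V * X⁻¹).PosSemidef := by
    simpa only [hX.inv.isHermitian.eq] using hV.mul_mul_conjTranspose_same X⁻¹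
  have hcross := hconj.trace_mul_nonneg hU
  simp_rw [hplane, hline]
  rw [deriv_deriv_det_add_smul_add_smul hdet, (hasDerivAt_det_add_smul hdet _).deriv,
    (hasDerivAt_det_add_smul hdet _).deriv]
  nlinarith [mul_nonneg (mul_self_nonneg X.det) hcross]
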